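/- For all 𝒜, 𝒝 ⊆ ℕ^ℕ: d_{𝒜×𝒝} ≡ᶜ_W d_𝒜 ⊕ d_𝒝 and d_{𝒜+𝒝} ≡ᶜ_W d_𝒜 ∐ d_𝒝, where 𝒜 × 𝒝 and 𝒜 + 𝒝 are the Medvedev product and sum. (Thus d is a lattice embedding of the dual of the continuous Medvedev lattice into the continuous Weihrauch lattice.) -/
import Mathlib


namespace Weihrauch

/-- Baire space ℕ^ℕ. -/
abbrev Baire : Type := ℕ → ℕ

/-- The interleaving pairing homeomorphism ⟨p,q⟩. -/
def pair (p q : Baire) : Baire := fun n => if n % 2 = 0 then p (n / 2) else q (n / 2)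

/-- First component of the interleaving pairing. -/
def left (z : Baire) : Baire := fun n => z (2 * n)

/-- Second component of the interleaving pairing. -/
def right (z : Baire) : Baire := fun n => z (2 * n + 1)

/-- The sequence np = n,p(0),p(1),… . -/
def cons (n : ℕ) (p : Baire) : Baire := fun m => match m with
  | 0 => n
  | k + 1 => p k

/-- Drop the first entry of a sequence. -/
def tail (z : Baire) : Baire := fun n => z (n + 1)

/-- The constant zero sequence 0^ℕ. -/
def zero : Baire := fun _ => 0

/-- The constant one sequence 1^ℕ. -/
def one : Baire := fun _ => 1

/-- Partial multivalued functions on Baire space. -/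
abbrev MV : Type := Baire → Set Baire

/-- The domain of a partial multivalued function. -/
def dom (P : MV) : Set Baire := {x | (P x).Nonempty}

/-- Continuous Weihrauch reducibility P ≤ᶜ_W Q. -/
def CWle (P Q : MV) : Prop :=
  ∃ H K : Baire → Baire,
    ContinuousOn K (dom P) ∧
    (∀ x ∈ dom P, K x ∈ dom Q) ∧
    ContinuousOn H {z | ∃ x ∈ dom P, ∃ y ∈ Q (K x), z = pair x y} ∧
    (∀ x ∈ dom P, ∀ y ∈ Q (K x), H (pair x y) ∈ P x)

/-- Continuous Weihrauch equivalence P ≡ᶜ_W Q. -/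
def CWequiv (P Q : MV) : Prop := CWle P Q ∧ CWle Q P

/-- The infimum operation (P ⊕ Q)(⟨p,q⟩) = 0P(p) ∪ 1Q(q) for p ∈ dom P, q ∈ dom Q. -/
def oplus (P Q : MV) : MV := fun z =>
  {r | left z ∈ dom P ∧ right z ∈ dom Q ∧
       ((∃ s ∈ P (left z), r = cons 0 s) ∨ (∃ s ∈ Q (right z), r = cons 1 s))}

/-- The coproduct (P ∐ Q)(0p) = 0P(p), (P ∐ Q)(1p) = 1Q(p). -/
def coprod (P Q : MV) : MV := fun z =>
  {r | (z 0 = 0 ∧ ∃ s ∈ P (tail z), r = cons 0 s) ∨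
       (z 0 = 1 ∧ ∃ s ∈ Q (tail z), r = cons 1 s)}

/-- The product (P × Q)(⟨p,q⟩) = {⟨r,s⟩ | r ∈ P(p), s ∈ Q(q)}. -/
def prod (P Q : MV) : MV := fun z =>
  {r | ∃ s ∈ P (left z), ∃ t ∈ Q (right z), r = pair s t}

/-- A fixed finite tupling ⟨p₀,…,p_{n-1}⟩ of n sequences, by interleaving. -/
def ftup (n : ℕ) (f : ℕ → Baire) : Baire := fun m => f (m % n) (m / n)

/-- The i-th projection inverting `ftup n`: `fproj n i (ftup n f) = f i` for i < n. -/
def fproj (n i : ℕ) (z : Baire) : Baire := fun j => z (j * n + i)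

/-- The finite parallelization P*, with P*(n⟨p₁,…,pₙ⟩) = {n⟨r₁,…,rₙ⟩ | rᵢ ∈ P(pᵢ)}
for n ≥ 1 and P*(0p) = {0^ℕ}.  (Note every sequence is of the form `ftup n f`,
since `ftup n (fun i => fproj n i z) = z`.) -/
def fpar (P : MV) : MV := fun z =>
  {r | (z 0 = 0 ∧ r = zero) ∨
       (1 ≤ z 0 ∧ r 0 = z 0 ∧
        ∀ i < z 0, fproj (z 0) i (tail r) ∈ P (fproj (z 0) i (tail z)))}

/-- Countable tupling ⟨p₁,p₂,…⟩ via the pairing bijection ℕ×ℕ→ℕ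
(the family is indexed by 0,1,2,…). -/
def ctup (f : ℕ → Baire) : Baire := fun m => f (Nat.unpair m).1 (Nat.unpair m).2

/-- Projection inverting `ctup`: `cproj i (ctup f) = f i`. -/
def cproj (i : ℕ) (z : Baire) : Baire := fun j => z (Nat.pair i j)

/-- The 1-indexed component pᵢ of a countable tuple z = ⟨p₁,p₂,…⟩ (for i ≥ 1). -/
def comp (z : Baire) (i : ℕ) : Baire := cproj (i - 1) z

/-- LLPO_{n,1}: at most one pair (i,j) with pᵢ(j) ≠ 0 in the domain;
values are the i0^ℕ with 1 ≤ i ≤ n and pᵢ = 0^ℕ. -/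
def LLPOn (n : ℕ) : MV := fun z =>
  {r | (∀ i j i' j', 1 ≤ i → 1 ≤ i' → comp z i j ≠ 0 → comp z i' j' ≠ 0 →
          (i = i' ∧ j = j')) ∧
       ∃ i, 1 ≤ i ∧ i ≤ n ∧ comp z i = zero ∧ r = cons i zero}

/-- LLPO_{∞,m}: at most m pairs (i,j) with pᵢ(j) ≠ 0 in the domain;
values are the i0^ℕ with pᵢ = 0^ℕ. -/
def LLPOinf (m : ℕ) : MV := fun z =>
  {r | (∃ s : Finset (ℕ × ℕ), s.card ≤ m ∧ ∀ i j, 1 ≤ i → comp z i j ≠ 0 → (i, j) ∈ s) ∧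
       ∃ i, 1 ≤ i ∧ comp z i = zero ∧ r = cons i zero}

/-- The sequence 0ⁿ10^ℕ. -/
def zeros1 (n : ℕ) : Baire := fun m => if m = n then 1 else 0

/-- Σ_k^∞LLPO(⟨0^ℕ,p⟩) = LLPO_{∞,2}(p), Σ_k^∞LLPO(⟨0ⁿ10^ℕ,p⟩) = LLPO_{n,1}(p) for n ≥ k. -/
def SigmaLLPO (k : ℕ) : MV := fun z =>
  {r | (left z = zero ∧ r ∈ LLPOinf 2 (right z)) ∨
       (∃ n, k ≤ n ∧ left z = zeros1 n ∧ r ∈ LLPOn n (right z))}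

/-- c_𝒜, with dom(c_𝒜) = {0^ℕ} and c_𝒜(0^ℕ) = 𝒜. -/
def cA (A : Set Baire) : MV := fun z => {r | z = zero ∧ r ∈ A}

/-- d_𝒜, with dom(d_𝒜) = 𝒜 and d_𝒜(x) = {1^ℕ} for x ∈ 𝒜. -/
def dA (A : Set Baire) : MV := fun z => {r | z ∈ A ∧ r = one}

/-- Continuous Medvedev reducibility 𝒜 ≤ᶜ_M 𝒝. -/
def CMle (A B : Set Baire) : Prop :=
  ∃ H : Baire → Baire, ContinuousOn H B ∧ ∀ x ∈ B, H x ∈ A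

/-- The Medvedev sum 𝒜 + 𝒝 = 0𝒜 ∪ 1𝒝. -/
def msum (A B : Set Baire) : Set Baire := (cons 0 '' A) ∪ (cons 1 '' B)

/-- The Medvedev product 𝒜 × 𝒝 = {⟨p,q⟩ | p ∈ 𝒜, q ∈ 𝒝}. -/
def mprod (A B : Set Baire) : Set Baire := {z | ∃ p ∈ A, ∃ q ∈ B, z = pair p q}

end Weihrauch



namespace Weihrauch

lemma left_pair (p q : Baire) : left (pair p q) = p := by
  funext n
  simp [left, pair, Nat.mul_mod_right, Nat.mul_div_cancel_left]

lemma right_pair (p q : Baire) : right (pair p q) = q := by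
  funext n
  have h1 : (2 * n + 1) % 2 = 1 := by omega
  have h2 : (2 * n + 1) / 2 = n := by omega
  simp [right, pair, h1, h2]

lemma pair_left_right (z : Baire) : pair (left z) (right z) = z := by
  funext n
  simp only [pair, left, right]
  split
  · congr 1; omega
  · congr 1; omega

lemma tail_cons (n : ℕ) (p : Baire) : tail (cons n p) = p := by
  funext m; rfl

lemma cons_head_tail (z : Baire) : cons (z 0) (tail z) = z := by
  funext m; cases m <;> rfl

lemma pair_apply_zero (x y : Baire) : pair x y 0 = x 0 := rfl

lemma mem_dom_dA {S : Set Baire} {x : Baire} (h : x ∈ S) : x ∈ dom (dA S) :=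
  ⟨one, h, rfl⟩

lemma dom_dA_subset {S : Set Baire} {x : Baire} (h : x ∈ dom (dA S)) : x ∈ S := by
  obtain ⟨r, hr, -⟩ := h; exact hr

end Weihrauch


open Weihrauch

/-- d_{𝒜×𝒝} ≡ᶜ_W d_𝒜 ⊕ d_𝒝 and d_{𝒜+𝒝} ≡ᶜ_W d_𝒜 ∐ d_𝒝: d is a lattice
embedding of the dual of the continuous Medvedev lattice into the continuous
Weihrauch lattice. -/
theorem dA_lattice_embedding (A B : Set Baire) :
    CWequiv (dA (mprod A B)) (oplus (dA A) (dA B)) ∧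
    CWequiv (dA (msum A B)) (coprod (dA A) (dA B)) := by
  constructor
  · constructor
    · -- dA (mprod A B) ≤ oplus
      refine ⟨fun _ => one, id, continuousOn_id, ?_, continuousOn_const, ?_⟩
      · intro x hx
        obtain ⟨p, hp, q, hq, rfl⟩ := dom_dA_subset hx
        refine ⟨cons 0 one, ?_, ?_, Or.inl ⟨one, ⟨?_, rfl⟩, rfl⟩⟩
        · rw [id_eq, left_pair]; exact mem_dom_dA hp
        · rw [id_eq, right_pair]; exact mem_dom_dA hq
        · rw [id_eq, left_pair]; exact hp
      · intro x hx y _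
        exact ⟨dom_dA_subset hx, rfl⟩
    · -- oplus ≤ dA (mprod A B)
      refine ⟨fun _ => cons 0 one, id, continuousOn_id, ?_, continuousOn_const, ?_⟩
      · intro x hx
        obtain ⟨r, hA, hB, -⟩ := hx
        exact ⟨one, ⟨left x, dom_dA_subset hA, right x, dom_dA_subset hB,
          (pair_left_right x).symm⟩, rfl⟩
      · intro x hx y _
        obtain ⟨r, hA, hB, -⟩ := hx
        exact ⟨hA, hB, Or.inl ⟨one, ⟨dom_dA_subset hA, rfl⟩, rfl⟩⟩
  · constructor
    · -- dA (msum A B) ≤ coprod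
      refine ⟨fun _ => one, id, continuousOn_id, ?_, continuousOn_const, ?_⟩
      · intro x hx
        rcases dom_dA_subset hx with ⟨p, hp, rfl⟩ | ⟨p, hp, rfl⟩
        · exact ⟨cons 0 one, Or.inl ⟨rfl, one, ⟨by rw [id_eq, tail_cons]; exact hp, rfl⟩, rfl⟩⟩
        · exact ⟨cons 1 one, Or.inr ⟨rfl, one, ⟨by rw [id_eq, tail_cons]; exact hp, rfl⟩, rfl⟩⟩
      · intro x hx y _
        exact ⟨dom_dA_subset hx, rfl⟩
    · -- coprod ≤ dA (msum A B)
      refine ⟨fun z => cons (z 0) one, id, continuousOn_id, ?_, ?_, ?_⟩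
      · intro x hx
        obtain ⟨r, hr⟩ := hx
        rcases hr with ⟨hx0, s, ⟨hs, -⟩, -⟩ | ⟨hx0, s, ⟨hs, -⟩, -⟩
        · refine ⟨one, Or.inl ⟨tail x, hs, ?_⟩, rfl⟩
          rw [← hx0]; rw [id_eq]; exact cons_head_tail x
        · refine ⟨one, Or.inr ⟨tail x, hs, ?_⟩, rfl⟩
          rw [← hx0]; rw [id_eq]; exact cons_head_tail x
      · refine Continuous.continuousOn ?_
        refine continuous_pi fun m => ?_
        match m with
        | 0 => exact continuous_apply 0
        | Nat.succ k => exact continuous_const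
      · intro x hx y _
        obtain ⟨r, hr⟩ := hx
        have hxy : (fun z => cons (z 0) one) (pair x y) = cons (x 0) one := rfl
        rw [hxy]
        rcases hr with ⟨hx0, s, ⟨hs, -⟩, -⟩ | ⟨hx0, s, ⟨hs, -⟩, -⟩
        · exact Or.inl ⟨hx0, one, ⟨hs, rfl⟩, by rw [hx0]⟩
        · exact Or.inr ⟨hx0, one, ⟨hs, rfl⟩, by rw [hx0]⟩
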